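/- Let 𝒳 = ∏_{j=1}^n 𝒳_j be a product of finite sets, let x⁽¹⁾ ∈ 𝒳 with prefix-partition sets P_1,…,P_n, and suppose x⁽²⁾ ∈ P_i for some i. Define Q_0 = { x ∈ 𝒳 : x_j = x⁽²⁾_j for all j < i, and x_i ∉ {x⁽¹⁾_i, x⁽²⁾_i} } and, for l = i+1,…,n, Q_l = { x ∈ 𝒳 : x_j = x⁽²⁾_j for all j < l, and x_l ≠ x⁽²⁾_l }. Then the collection { P_j : j ∈ [n], j ≠ i } ∪ { Q_0, Q_{i+1}, …, Q_n } consists of pairwise disjoint sets whose union equals 𝒳 ∖ {x⁽¹⁾, x⁽²⁾}. -/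

import Mathlib

/-!
Every assignment other than `x1` lies in exactly one prefix cell of `x1`, the one indexed by its
first disagreement with `x1`. Since `x2 ∈ P i`, the cell `P i` minus `x2` is split the same way
by the first disagreement `l` with `x2`: `l < i` cannot happen inside `P i`, because there `x2`
agrees with `x1`; `l = i` gives `Q0` and `l > i` gives `Q l`. Replacing `P i` by these pieces
gives the refined partition.
-/

open Function Set

theorem pairwise_disjoint_sumElim {α β γ : Type*} [PartialOrder γ] [OrderBot γ]
    {f : α → γ} {g : β → γ} (hf : Pairwise (Disjoint on f)) (hg : Pairwise (Disjoint on g))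
    (hfg : ∀ a b, Disjoint (f a) (g b)) : Pairwise (Disjoint on Sum.elim f g) := by
  rintro (a | a) (b | b) hab
  · exact hf (ne_of_apply_ne Sum.inl hab)
  · exact hfg a b
  · exact (hfg b a).symm
  · exact hg (ne_of_apply_ne Sum.inr hab)

section PrefixCell

variable {ι : Type*} [LinearOrder ι] {α : ι → Type*}

def prefixCell (y : ∀ j, α j) (k : ι) : Set (∀ j, α j) :=
  {x | (∀ j, j < k → x j = y j) ∧ x k ≠ y k}

theorem self_notMem_prefixCell (y : ∀ j, α j) (k : ι) : y ∉ prefixCell y k :=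
  fun h => h.2 rfl

theorem disjoint_prefixCell_of_lt (y : ∀ j, α j) {k l : ι} (h : k < l) :
    Disjoint (prefixCell y k) (prefixCell y l) :=
  disjoint_left.2 fun _ hk hl => hk.2 (hl.1 k h)

theorem pairwise_disjoint_prefixCell (y : ∀ j, α j) : Pairwise (Disjoint on prefixCell y) := by
  intro k l hkl
  rcases hkl.lt_or_gt with h | h
  · exact disjoint_prefixCell_of_lt y h
  · exact (disjoint_prefixCell_of_lt y h).symm

theorem exists_mem_prefixCell [WellFoundedLT ι] {x y : ∀ j, α j} (h : x ≠ y) :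
    ∃ k, x ∈ prefixCell y k := by
  obtain ⟨k, hk, hmin⟩ := wellFounded_lt.has_min {j | x j ≠ y j} (Function.ne_iff.1 h)
  exact ⟨k, fun j hj => not_not.1 fun hne => hmin j hne hj, hk⟩

variable {y z : ∀ j, α j} {i : ι}

theorem disjoint_prefixCell_of_mem_of_lt (hz : z ∈ prefixCell y i) {l : ι} (hl : l < i) :
    Disjoint (prefixCell z l) (prefixCell y i) :=
  disjoint_left.2 fun _ hxz hxy => hxz.2 ((hxy.1 l hl).trans (hz.1 l hl).symm)

theorem prefixCell_subset_of_mem_of_lt (hz : z ∈ prefixCell y i) {l : ι} (hl : i < l) :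
    prefixCell z l ⊆ prefixCell y i := by
  refine fun x hx => ⟨fun j hj => (hx.1 j (hj.trans hl)).trans (hz.1 j hj), ?_⟩
  rw [hx.1 i hl]
  exact hz.2

theorem prefixCell_inter_prefixCell (hz : z ∈ prefixCell y i) :
    prefixCell y i ∩ prefixCell z i =
      {x | (∀ j, j < i → x j = z j) ∧ x i ≠ y i ∧ x i ≠ z i} := by
  ext x
  constructor
  · rintro ⟨⟨-, hxy⟩, hxz, hxz'⟩
    exact ⟨hxz, hxy, hxz'⟩
  · rintro ⟨hxz, hxy, hxz'⟩
    exact ⟨⟨fun j hj => (hxz j hj).trans (hz.1 j hj), hxy⟩, hxz, hxz'⟩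

variable (y z i) in
def prefixCellRefinement : Unit ⊕ {l : ι // i < l} → Set (∀ j, α j) :=
  Sum.elim (fun _ => prefixCell y i ∩ prefixCell z i) fun l => prefixCell z l

theorem pairwise_disjoint_prefixCellRefinement :
    Pairwise (Disjoint on prefixCellRefinement y z i) :=
  pairwise_disjoint_sumElim Subsingleton.pairwise
    ((pairwise_disjoint_prefixCell z).comp_of_injective Subtype.val_injective)
    fun _ l => (pairwise_disjoint_prefixCell z l.2.ne).mono_left inter_subset_right

theorem iUnion_prefixCellRefinement [WellFoundedLT ι] (hz : z ∈ prefixCell y i) :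
    ⋃ b, prefixCellRefinement y z i b = prefixCell y i \ {z} := by
  ext x
  simp only [prefixCellRefinement, iUnion_sumElim, iUnion_const, mem_union, mem_iUnion,
    mem_sdiff, mem_singleton_iff]
  constructor
  · rintro (⟨hxy, hxz⟩ | ⟨l, hxz⟩)
    · exact ⟨hxy, fun h => self_notMem_prefixCell z i (h ▸ hxz)⟩
    · exact ⟨prefixCell_subset_of_mem_of_lt hz l.2 hxz,
        fun h => self_notMem_prefixCell z l (h ▸ hxz)⟩
  · rintro ⟨hxy, hne⟩
    obtain ⟨l, hxz⟩ := exists_mem_prefixCell hne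
    rcases lt_trichotomy l i with hl | rfl | hl
    · exact absurd hxy (disjoint_left.1 (disjoint_prefixCell_of_mem_of_lt hz hl) hxz)
    · exact .inl ⟨hxy, hxz⟩
    · exact .inr ⟨⟨l, hl⟩, hxz⟩

variable (y z i) in
def refinedPrefixCells :
    {j : ι // j ≠ i} ⊕ (Unit ⊕ {l : ι // i < l}) → Set (∀ j, α j) :=
  Sum.elim (fun j => prefixCell y j) (prefixCellRefinement y z i)

theorem pairwise_disjoint_refinedPrefixCells [WellFoundedLT ι] (hz : z ∈ prefixCell y i) :
    Pairwise (Disjoint on refinedPrefixCells y z i) := by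
  refine pairwise_disjoint_sumElim
    ((pairwise_disjoint_prefixCell y).comp_of_injective Subtype.val_injective)
    pairwise_disjoint_prefixCellRefinement fun j b => ?_
  refine (pairwise_disjoint_prefixCell y j.2).mono_right ?_
  exact (subset_iUnion _ b).trans ((iUnion_prefixCellRefinement hz).subset.trans sdiff_subset)

theorem iUnion_refinedPrefixCells [WellFoundedLT ι] (hz : z ∈ prefixCell y i) :
    ⋃ c, refinedPrefixCells y z i c = {y, z}ᶜ := by
  ext x
  simp only [refinedPrefixCells, iUnion_sumElim, iUnion_prefixCellRefinement hz, mem_union,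
    mem_iUnion, mem_sdiff, mem_singleton_iff, mem_compl_iff, mem_insert_iff, not_or]
  constructor
  · rintro (⟨j, hxy⟩ | ⟨hxy, hxz⟩)
    · refine ⟨fun h => self_notMem_prefixCell y j (h ▸ hxy), fun h => ?_⟩
      exact disjoint_left.1 (pairwise_disjoint_prefixCell y j.2) hxy (h ▸ hz)
    · exact ⟨fun h => self_notMem_prefixCell y i (h ▸ hxy), hxz⟩
  · rintro ⟨hne, hxz⟩
    obtain ⟨k, hxy⟩ := exists_mem_prefixCell hne
    by_cases hk : k = i
    · exact .inr ⟨hk ▸ hxy, hxz⟩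
    · exact .inl ⟨⟨k, hk⟩, hxy⟩

end PrefixCell

theorem prefix_partition_refine {n : ℕ} (𝒳 : Fin n → Type*)
    (x1 x2 : ∀ j, 𝒳 j) (i : Fin n)
    (P : Fin n → Set (∀ j, 𝒳 j))
    (hP : P = fun k => {x | (∀ j, j < k → x j = x1 j) ∧ x k ≠ x1 k})
    (hx2 : x2 ∈ P i)
    (Q0 : Set (∀ j, 𝒳 j))
    (hQ0 : Q0 = {x | (∀ j, j < i → x j = x2 j) ∧ x i ≠ x1 i ∧ x i ≠ x2 i})
    (Q : Fin n → Set (∀ j, 𝒳 j))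
    (hQ : Q = fun l => {x | (∀ j, j < l → x j = x2 j) ∧ x l ≠ x2 l})
    (F : ({j : Fin n // j ≠ i} ⊕ (Unit ⊕ {l : Fin n // i < l})) → Set (∀ j, 𝒳 j))
    (hF : F = fun idx => match idx with
      | Sum.inl j => P j.1
      | Sum.inr (Sum.inl _) => Q0
      | Sum.inr (Sum.inr l) => Q l.1) :
    (Pairwise (Function.onFun Disjoint F)) ∧
    (⋃ idx, F idx) = ({x1, x2} : Set (∀ j, 𝒳 j))ᶜ := by
  obtain rfl : P = prefixCell x1 := hP
  obtain rfl : Q = prefixCell x2 := hQ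
  obtain rfl : Q0 = prefixCell x1 i ∩ prefixCell x2 i :=
    hQ0.trans (prefixCell_inter_prefixCell hx2).symm
  obtain rfl : F = refinedPrefixCells x1 x2 i := hF.trans <| funext fun
    | .inl _ | .inr (.inl _) | .inr (.inr _) => rfl
  exact ⟨pairwise_disjoint_refinedPrefixCells hx2, iUnion_refinedPrefixCells hx2⟩
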